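/- Subject reduction for the permutation rule of λG: if Γ ⊢ (u ∥ₐ v) w : D, obtained from u ∥ₐ v : C→D (with a : A→B discharged in u and a : B→A discharged in v) and w : C where a does not occur free in w, then Γ ⊢ (uw) ∥ₐ (vw) : D, and every free variable of (uw) ∥ₐ (vw) is a free variable of (u ∥ₐ v) w. -/
import Mathlib


/-- Formulas (= types) built from atoms, ⊥, ∧ and →. -/
inductive Form where
  | atom : ℕ → Form
  | bot  : Form
  | conj : Form → Form → Form
  | imp  : Form → Form → Form
deriving DecidableEq

/-- Terms of the λG-calculus: simply typed λ-terms extended with the parallel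
operator u ∥ₐ v (the channel a is annotated with its communication kind B, C). -/
inductive Tm where
  | var : ℕ → Tm
  | lam : ℕ → Form → Tm → Tm
  | app : Tm → Tm → Tm
  | pair : Tm → Tm → Tm
  | proj : Bool → Tm → Tm
  | efq : ℕ → Tm → Tm
  | par : ℕ → Form → Form → Tm → Tm → Tm
deriving DecidableEq

/-- Free variables of a λG-term; in u ∥ₐ v the channel a is bound. -/
def FV : Tm → Set ℕ
  | .var x => {x}
  | .lam x _ u => FV u \ {x}
  | .app u w => FV u ∪ FV w
  | .pair u v => FV u ∪ FV v
  | .proj _ u => FV u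
  | .efq _ u => FV u
  | .par a _ _ u v => (FV u ∪ FV v) \ {a}

/-- A term is a simply typed λ-term iff it contains no parallel operator. -/
def NoPar : Tm → Prop
  | .var _ => True
  | .lam _ _ u => NoPar u
  | .app u w => NoPar u ∧ NoPar w
  | .pair u v => NoPar u ∧ NoPar v
  | .proj _ u => NoPar u
  | .efq _ u => NoPar u
  | .par _ _ _ _ _ => False

def IsLam : Tm → Prop
  | .lam _ _ _ => True
  | _ => False

def IsPair : Tm → Prop
  | .pair _ _ => True
  | _ => False

def IsPar : Tm → Prop
  | .par _ _ _ _ _ => True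
  | _ => False

def upd (Γ : ℕ → Option Form) (x : ℕ) (A : Form) : ℕ → Option Form :=
  fun y => if y = x then some A else Γ y

/-- Typing for λG: simply typed λ-calculus rules plus the (com) rule, which
types u ∥ₐ v : A from u : A under a : B→C and v : A under a : C→B. -/
inductive Typed : (ℕ → Option Form) → Tm → Form → Prop
  | var : Γ x = some A → Typed Γ (.var x) A
  | lam : Typed (upd Γ x A) u B → Typed Γ (.lam x A u) (.imp A B)
  | app : Typed Γ u (.imp A B) → Typed Γ w A → Typed Γ (.app u w) B
  | pair : Typed Γ u A → Typed Γ v B → Typed Γ (.pair u v) (.conj A B)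
  | projL : Typed Γ u (.conj A B) → Typed Γ (.proj false u) A
  | projR : Typed Γ u (.conj A B) → Typed Γ (.proj true u) B
  | efq : Typed Γ u .bot → Typed Γ (.efq n u) (.atom n)
  | par : Typed (upd Γ a (.imp B C)) u A → Typed (upd Γ a (.imp C B)) v A →
      Typed Γ (.par a B C u v) A

theorem typed_congr {Γ Γ' : ℕ → Option Form} {t : Tm} {A : Form}
    (h : Typed Γ t A) (hagree : ∀ x ∈ FV t, Γ x = Γ' x) : Typed Γ' t A := by
  induction h generalizing Γ' with
  | var h => exact .var ((hagree _ rfl).symm.trans h)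
  | lam _ ih =>
    refine .lam (ih fun y hy => ?_)
    unfold upd; split
    · rfl
    · next h => exact hagree y ⟨hy, by simpa using h⟩
  | app _ _ ih1 ih2 =>
    exact .app (ih1 fun y hy => hagree y (Or.inl hy)) (ih2 fun y hy => hagree y (Or.inr hy))
  | pair _ _ ih1 ih2 =>
    exact .pair (ih1 fun y hy => hagree y (Or.inl hy)) (ih2 fun y hy => hagree y (Or.inr hy))
  | projL _ ih => exact .projL (ih hagree)
  | projR _ ih => exact .projR (ih hagree)
  | efq _ ih => exact .efq (ih hagree)
  | par _ _ ih1 ih2 =>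
    refine .par (ih1 fun y hy => ?_) (ih2 fun y hy => ?_) <;>
    · unfold upd; split
      · rfl
      · next h => exact hagree y (by
          simp only [FV, Set.mem_diff, Set.mem_union, Set.mem_singleton_iff]
          exact ⟨by tauto, by simpa using h⟩)

/-- Subject reduction for the permutation reduction (u ∥ₐ v) w ↦ (uw) ∥ₐ (vw):
if (u ∥ₐ v) w : D is obtained from u ∥ₐ v : C→D (with a : A→B discharged in u
and a : B→A in v) and w : C, where a does not occur free in w, then
(uw) ∥ₐ (vw) : D, and its free variables are among those of (u ∥ₐ v) w. -/
theorem perm_subject_reduction (Γ : ℕ → Option Form) (a : ℕ)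
    (A B C D : Form) (u v w : Tm)
    (hu : Typed (upd Γ a (.imp A B)) u (.imp C D))
    (hv : Typed (upd Γ a (.imp B A)) v (.imp C D))
    (hw : Typed Γ w C) (ha : a ∉ FV w) :
    Typed Γ (.par a A B (.app u w) (.app v w)) D ∧
    FV (.par a A B (.app u w) (.app v w)) ⊆ FV (.app (.par a A B u v) w) := by
  constructor
  · refine .par (.app hu (typed_congr hw fun x hx => ?_)) (.app hv (typed_congr hw fun x hx => ?_)) <;>
    · unfold upd; split
      · next h => exact absurd hx (by rw [h] at *; exact ha)
      · rfl
  · intro x hx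
    simp only [FV, Set.mem_diff, Set.mem_union, Set.mem_singleton_iff] at hx ⊢
    rcases hx with ⟨h1 | h1, h2⟩
    · rcases h1 with h1 | h1
      · exact Or.inl ⟨Or.inl h1, h2⟩
      · exact Or.inr h1
    · rcases h1 with h1 | h1
      · exact Or.inl ⟨Or.inr h1, h2⟩
      · exact Or.inr h1
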